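/- arXiv:0809.1563 — 2 statements merged into one kernel-verified Lean document; each statement's English description precedes it below -/
import Mathlib

section
/- Let A be a finite-type k-linear abelian category with End(L) ≅ k for all simple objects L. If a simple object L(s) has an injective hull (I,ψ), then for every object X of A, [X : L(s)] = dim_k Hom(X, I). -/
open CategoryTheory CategoryTheory.Limits

universe v u

namespace StmtAux

variable {A : Type u} [Category.{v} A] [Abelian A]

/-- `CompFactors X l` asserts that `l` is a list of composition factors for `X`. -/
inductive CompFactors : A → List A → Prop
  | nil {X : A} (h : IsZero X) : CompFactors X []
  | cons {X Y L : A} {l : List A} (hL : Simple L) (i : Y ⟶ X) (p : X ⟶ L)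
      (w : i ≫ p = 0) (hse : (ShortComplex.mk i p w).ShortExact)
      (h : CompFactors Y l) : CompFactors X (L :: l)

open Classical in
/-- The multiplicity `[l : L]` : the number of members of `l` isomorphic to `L`. -/
noncomputable def mult (L : A) (l : List A) : ℕ :=
  l.countP (fun M => decide (Nonempty (M ≅ L)))

end StmtAux

open StmtAux

/-!
Since `I` is injective, `X ↦ dim Hom(X, I)` is additive on short exact sequences, so by induction
along a composition series it suffices to treat a simple `S`. A nonzero `f : S ⟶ I` is mono, and
essentiality of `ψ` forces `im ψ ⊆ im f`; both are simple, so `f` factors through `ψ` by an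
isomorphism. Hence `Hom(S, I) ≃ Hom(S, L)`, which is `k` if `S ≅ L` (as `End L = k`) and `0`
otherwise.
-/

section

variable {k : Type*} [Field k] {A : Type u} [Category.{v} A] [Abelian A] [Linear k A]

theorem CategoryTheory.ShortComplex.ShortExact.rank_hom_injective {S : ShortComplex A}
    (hS : S.ShortExact) (I : A) [Injective I] :
    Module.rank k (S.X₂ ⟶ I) = Module.rank k (S.X₁ ⟶ I) + Module.rank k (S.X₃ ⟶ I) := by
  have := hS.mono_f
  have := hS.epi_g
  let restrict : (S.X₂ ⟶ I) →ₗ[k] (S.X₁ ⟶ I) := Linear.leftComp k I S.f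
  let extend : (S.X₃ ⟶ I) →ₗ[k] (S.X₂ ⟶ I) := Linear.leftComp k I S.g
  have restrict_surjective : Function.Surjective restrict := fun g =>
    ⟨Injective.factorThru g S.f, Injective.comp_factorThru g S.f⟩
  have extend_injective : Function.Injective extend := fun a b hab => (cancel_epi S.g).mp hab
  have range_extend : LinearMap.range extend = LinearMap.ker restrict := by
    apply le_antisymm
    · rintro f ⟨g, rfl⟩
      exact (S.zero_assoc g).trans zero_comp
    · intro f (hf : S.f ≫ f = 0)
      exact ⟨_, (CokernelCofork.IsColimit.desc' hS.gIsCokernel f hf).2⟩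
  rw [← LinearMap.rank_range_add_rank_ker restrict, LinearMap.range_eq_top.2 restrict_surjective,
    rank_top, ← range_extend, LinearEquiv.rank_eq (LinearEquiv.ofInjective extend extend_injective)]

section EssentialMono

variable {L I : A} [Simple L] (ψ : L ⟶ I) [Mono ψ]
  (hess : ∀ (Z : A) (g : I ⟶ Z), Mono (ψ ≫ g) → Mono g)
include hess

omit [Linear k A] in
theorem exists_comp_eq_of_essential_mono {S : A} [Simple S] (f : S ⟶ I) :
    ∃ g : S ⟶ L, g ≫ ψ = f := by
  by_cases hf : f = 0
  · exact ⟨0, by rw [hf, zero_comp]⟩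
  have : Mono f := mono_of_nonzero_from_simple hf
  have hψf : ψ ≫ cokernel.π f = 0 := by
    by_contra h
    have : Mono (ψ ≫ cokernel.π f) := mono_of_nonzero_from_simple h
    have : Mono (cokernel.π f) := hess _ _ this
    exact hf ((cancel_mono (cokernel.π f)).mp (by rw [cokernel.condition, zero_comp]))
  let u : L ⟶ S := Abelian.monoLift f ψ hψf
  have hu : u ≫ f = ψ := Abelian.monoLift_comp f ψ hψf
  have : IsIso u := isIso_of_hom_simple fun h => by
    have : (𝟙 L) ≫ ψ = 0 ≫ ψ := by rw [← hu, h, zero_comp, zero_comp, Category.id_comp]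
    exact id_nonzero L ((cancel_mono ψ).mp this)
  exact ⟨inv u, by rw [← hu, IsIso.inv_hom_id_assoc]⟩

theorem rank_hom_eq_of_essential_mono (S : A) [Simple S] :
    Module.rank k (S ⟶ I) = Module.rank k (S ⟶ L) := by
  have bijective : Function.Bijective (Linear.rightComp k S ψ) :=
    ⟨fun _ _ h => (cancel_mono ψ).mp h, exists_comp_eq_of_essential_mono ψ hess⟩
  exact (LinearEquiv.ofBijective _ bijective).rank_eq.symm

end EssentialMono

open Classical in
theorem rank_hom_simple_simple {L : A} [Simple L] (hend : ∀ f : L ⟶ L, ∃ c : k, f = c • 𝟙 L)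
    (S : A) [Simple S] :
    Module.rank k (S ⟶ L) = if Nonempty (S ≅ L) then 1 else 0 := by
  split_ifs with h
  · obtain ⟨e⟩ := h
    rw [(Linear.homCongr k e (Iso.refl L)).rank_eq]
    exact rank_eq_one (𝟙 L) (id_nonzero L) fun f => (hend f).imp fun _ hc => hc.symm
  · have : Subsingleton (S ⟶ L) := subsingleton_of_forall_eq 0 fun f =>
      by_contra fun hf => h ⟨@asIso _ _ _ _ f (isIso_of_hom_simple hf)⟩
    exact rank_subsingleton' _ _

theorem rank_hom_injective_hull_eq_mult {L : A} [Simple L]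
    (hend : ∀ f : L ⟶ L, ∃ c : k, f = c • 𝟙 L) {I : A} [Injective I] (ψ : L ⟶ I) [Mono ψ]
    (hess : ∀ (Z : A) (g : I ⟶ Z), Mono (ψ ≫ g) → Mono g)
    {X : A} {l : List A} (hl : CompFactors X l) :
    Module.rank k (X ⟶ I) = mult L l := by
  induction hl with
  | nil hX =>
    have : Subsingleton (_ ⟶ I) := ⟨fun a b => hX.eq_of_src a b⟩
    simp [mult]
  | @cons X Y S l hS i p w hse _ ih =>
    rw [hse.rank_hom_injective I, ih, rank_hom_eq_of_essential_mono ψ hess,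
      rank_hom_simple_simple hend]
    by_cases h : Nonempty (S ≅ L) <;> simp [mult, h]

end

theorem stmt2_general (k : Type*) [Field k] (A : Type u) [Category.{v} A] [Abelian A]
    [Linear k A]
    (hend : ∀ L : A, Simple L → ∀ f : L ⟶ L, ∃ c : k, f = c • 𝟙 L)
    (L : A) (hL : Simple L)
    (I : A) (hI : Injective I) (ψ : L ⟶ I) (hψ : Mono ψ)
    (hess : ∀ (Z : A) (g : I ⟶ Z), Mono (ψ ≫ g) → Mono g)
    (X : A) (l : List A) (hl : CompFactors X l) :
    mult L l = Module.finrank k (X ⟶ I) :=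
  (Module.finrank_eq_of_rank_eq (rank_hom_injective_hull_eq_mult (hend L hL) ψ hess hl)).symm

/-- In a finite-type `k`-linear abelian category with scalar
endomorphisms of simple objects, if a simple object `L` has an injective hull
`(I, ψ)`, then for every object `X`, `[X : L] = dim_k Hom(X, I)`. -/
theorem stmt2 (k : Type*) [Field k] (A : Type u) [Category.{v} A] [Abelian A]
    [Linear k A]
    (hfl : ∀ X : A, ∃ l : List A, CompFactors X l)
    (hend : ∀ L : A, Simple L → ∀ f : L ⟶ L, ∃ c : k, f = c • 𝟙 L)
    (L : A) (hL : Simple L)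
    (I : A) (hI : Injective I) (ψ : L ⟶ I) (hψ : Mono ψ)
    (hess : ∀ (Z : A) (g : I ⟶ Z), Mono (ψ ≫ g) → Mono g)
    (X : A) (l : List A) (hl : CompFactors X l) :
    mult L l = Module.finrank k (X ⟶ I) :=
  stmt2_general k A hend L hL I hI ψ hψ hess X l hl
end

section
/- Let A be a finite-type abelian category, s an element of the ordered set S of simple isomorphism classes, M(s) a standard cover and N(s) a costandard hull of L(s). Then the pairing Hom(M(s), X) ⊗ Hom(X, N(s)) → Hom(M(s), N(s)) ≅ k given by composition is nondegenerate for any object X of A_{⪯s}; in particular dim Hom(M(s), X) = dim Hom(X, N(s)). -/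
/-!
Since `M s` is projective in `A_{⪯s}`, `Hom(M s, -)` is exact on short exact sequences in
`A_{⪯s}`; since `M s` has simple top `L s`, precomposition with `M s ↠ L s` identifies
`Hom(L s, T)` with `Hom(M s, T)` for every simple `T`, which by Schur's lemma and
`End(L s) = k` has dimension `[T : L s]`. Walking along a composition series gives
`dim Hom(M s, X) = [X : L s]`, and dually `dim Hom(X, N s) = [X : L s]`; for `X = N s` this
is `1`.

For nondegeneracy, a nonzero `f : M s ⟶ X` has a nonzero image in `A_{⪯s}`, whose simple
quotients are all `L s` because they are quotients of `M s`. The resulting map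
`im f ↠ L s ↪ N s` extends to `X` by injectivity of `N s`, and its composite with `f` is
`M s ↠ L s ↪ N s ≠ 0`. The other side is dual, using a simple subobject of the image of
`g : X ⟶ N s`, which must be the socle `L s` of `N s`.
-/

open CategoryTheory CategoryTheory.Limits

attribute [local instance] CategoryTheory.Limits.HasFiniteBiproducts.of_hasFiniteProducts

universe v u

open StmtAux

namespace StmtAux

variable {A : Type u} [Category.{v} A] [Abelian A] {S : Type*} [LinearOrder S]

/-- `X` belongs to the Serre subcategory `A_{⪯ s}` generated by the simple
objects `L t` for `t ⪯ s`: all composition factors of `X` are of this form. -/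
def InSub (L : S → A) (s : S) (X : A) : Prop :=
  ∃ l : List A, CompFactors X l ∧ ∀ M ∈ l, ∃ t : S, t ≤ s ∧ Nonempty (M ≅ L t)

/-- The data of standard covers `M s` and costandard hulls `N s` for the family
of simple objects `L s`, `s ∈ S`:  `M s` is a projective cover of `L s` within
the Serre subcategory `A_{⪯ s}` with `[M s : L s] = 1`, and `N s` is an injective
hull of `L s` within `A_{⪯ s}` with `[N s : L s] = 1`.  A category admitting such
data is quasi-hereditary. -/
structure QHData (L : S → A) where
  M : S → A
  N : S → A
  φ : ∀ s : S, M s ⟶ L s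
  ψ : ∀ s : S, L s ⟶ N s
  M_mem : ∀ s : S, InSub L s (M s)
  N_mem : ∀ s : S, InSub L s (N s)
  φ_epi : ∀ s : S, Epi (φ s)
  ψ_mono : ∀ s : S, Mono (ψ s)
  M_proj : ∀ (s : S) (X Y : A), InSub L s X → InSub L s Y →
      ∀ (p : X ⟶ Y), Epi p → ∀ f : M s ⟶ Y, ∃ g : M s ⟶ X, g ≫ p = f
  N_inj : ∀ (s : S) (X Y : A), InSub L s X → InSub L s Y →
      ∀ (i : X ⟶ Y), Mono i → ∀ f : X ⟶ N s, ∃ g : Y ⟶ N s, i ≫ g = f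
  φ_ess : ∀ (s : S) (Z : A) (g : Z ⟶ M s), Epi (g ≫ φ s) → Epi g
  ψ_ess : ∀ (s : S) (Z : A) (g : N s ⟶ Z), Mono (ψ s ≫ g) → Mono g
  M_mult : ∀ (s : S) (l : List A), CompFactors (M s) l → mult (L s) l = 1
  N_mult : ∀ (s : S) (l : List A), CompFactors (N s) l → mult (L s) l = 1

end StmtAux

universe w

theorem rank_eq_add_of_shortExact {K : Type*} [DivisionRing K] {D E F : Type w}
    [AddCommGroup D] [Module K D] [AddCommGroup E] [Module K E] [AddCommGroup F] [Module K F]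
    {α : D →ₗ[K] E} {β : E →ₗ[K] F} (hα : Function.Injective α) (hβ : Function.Surjective β)
    (hαβ : Function.Exact α β) :
    Module.rank K E = Module.rank K D + Module.rank K F := by
  rw [LinearMap.rank_eq_of_surjective hβ, LinearMap.exact_iff.mp hαβ,
    ← (LinearEquiv.ofInjective α hα).rank_eq, add_comm]

section Schur

variable {C : Type*} [Category C] [Preadditive C] [HasKernels C] {K : Type*} [Field K]
  [Linear K C]

theorem subsingleton_hom_of_isEmpty_iso {X Y : C} [Simple X] [Simple Y] (h : IsEmpty (X ≅ Y)) :
    Subsingleton (X ⟶ Y) :=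
  subsingleton_of_forall_eq 0 fun f => by_contra fun hf =>
    have := isIso_of_hom_simple hf
    h.false (asIso f)

omit [HasKernels C] in
theorem rank_end_eq_one {X : C} [Simple X] (hX : ∀ f : X ⟶ X, ∃ c : K, f = c • 𝟙 X) :
    Module.rank K (X ⟶ X) = 1 :=
  rank_eq_one (𝟙 X) (id_nonzero X) fun f => (hX f).imp fun _ h => h.symm

open Classical in
theorem rank_hom_simple_simple_of_end_src {X Y : C} [Simple X] [Simple Y]
    (hX : ∀ f : X ⟶ X, ∃ c : K, f = c • 𝟙 X) :
    Module.rank K (X ⟶ Y) = if Nonempty (Y ≅ X) then 1 else 0 := by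
  split_ifs with h
  · rw [(Linear.homCongr K (Iso.refl X) h.some).rank_eq, rank_end_eq_one hX]
  · have := subsingleton_hom_of_isEmpty_iso (X := X) (Y := Y) ⟨fun e => h ⟨e.symm⟩⟩
    exact rank_subsingleton' K _

open Classical in
theorem rank_hom_simple_simple_of_end_tgt {X Y : C} [Simple X] [Simple Y]
    (hX : ∀ f : X ⟶ X, ∃ c : K, f = c • 𝟙 X) :
    Module.rank K (Y ⟶ X) = if Nonempty (Y ≅ X) then 1 else 0 := by
  split_ifs with h
  · rw [(Linear.homCongr K h.some (Iso.refl X)).rank_eq, rank_end_eq_one hX]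
  · have := subsingleton_hom_of_isEmpty_iso (X := Y) (Y := X) ⟨fun e => h ⟨e⟩⟩
    exact rank_subsingleton' K _

end Schur

namespace StmtAux

variable {A : Type u} [Category.{v} A] [Abelian A]

open ZeroObject in
theorem compFactors_simple {T : A} (hT : Simple T) : CompFactors T [T] := by
  have w : (0 : (0 : A) ⟶ T) ≫ 𝟙 T = 0 := by simp
  refine .cons hT 0 (𝟙 T) w ?_ (.nil (isZero_zero A))
  exact .mk' ((ShortComplex.exact_iff_mono _ rfl).mpr inferInstance) inferInstance inferInstance

theorem not_isZero_image {X Y : A} {f : X ⟶ Y} (hf : f ≠ 0) : ¬IsZero (image f) := fun h =>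
  hf (by rw [← image.fac f, h.eq_of_src (image.ι f) 0, comp_zero])

namespace CompFactors

theorem exists_sublist_of_mono {X : A} {l : List A} (h : CompFactors X l) {W : A} (m : W ⟶ X)
    [Mono m] : ∃ lW : List A, CompFactors W lW ∧ lW.Sublist l := by
  induction h generalizing W with
  | nil hX => exact ⟨[], .nil (hX.of_mono m), List.nil_sublist _⟩
  | @cons X Y T l hT i p w hse hY ih =>
    have := hse.mono_f
    by_cases hmp : m ≫ p = 0
    · obtain ⟨m', hm'⟩ := hse.exact.lift' m hmp
      have : Mono m' := by
        have : Mono (m' ≫ i) := hm' ▸ inferInstance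
        exact mono_of_mono m' i
      obtain ⟨lW, hW, hsub⟩ := ih m'
      exact ⟨lW, hW, hsub.cons T⟩
    · have hepi := epi_of_nonzero_to_simple hmp
      -- The kernel of the epimorphism `W ↠ T` is a subobject of `Y`.
      obtain ⟨n, hn⟩ := hse.exact.lift' (kernel.ι (m ≫ p) ≫ m) (by simp)
      have : Mono n := by
        have : Mono (n ≫ i) := hn ▸ inferInstance
        exact mono_of_mono n i
      obtain ⟨lK, hK, hsub⟩ := ih n
      have hker : (ShortComplex.mk _ _ (kernel.condition (m ≫ p))).ShortExact :=
        .mk' (ShortComplex.kernelSequence_exact _) inferInstance hepi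
      exact ⟨T :: lK, .cons hT _ _ (kernel.condition _) hker hK, hsub.cons_cons T⟩

theorem exists_epi_simple {X : A} {l : List A} (h : CompFactors X l) (hX : ¬IsZero X) :
    ∃ (T : A) (_ : Simple T) (p : X ⟶ T), Epi p := by
  cases h with
  | nil h => exact absurd h hX
  | cons hT _ p _ hse _ => exact ⟨_, hT, p, hse.epi_g⟩

theorem exists_mono_simple {X : A} {l : List A} (h : CompFactors X l) (hX : ¬IsZero X) :
    ∃ (T : A) (_ : Simple T) (n : T ⟶ X), Mono n := by
  induction h with
  | nil h => exact absurd h hX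
  | @cons X Y T l hT i p w hse hY ih =>
    have := hse.mono_f
    by_cases hYz : IsZero Y
    · have := (hse.isIso_g_iff).mpr hYz
      exact ⟨T, hT, inv p, inferInstance⟩
    · obtain ⟨T', hT', n, _⟩ := ih hYz
      exact ⟨T', hT', n ≫ i, mono_comp _ _⟩

end CompFactors

variable {S : Type*} [LinearOrder S] {L : S → A} {s : S}

theorem InSub.of_mono {X W : A} (hX : InSub L s X) (m : W ⟶ X) [Mono m] : InSub L s W := by
  obtain ⟨l, hl, hfac⟩ := hX
  obtain ⟨lW, hW, hsub⟩ := hl.exists_sublist_of_mono m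
  exact ⟨lW, hW, fun M hM => hfac M (hsub.subset hM)⟩

theorem inSub_of_simple {T : A} (hT : Simple T) {t : S} (ht : t ≤ s) (e : T ≅ L t) :
    InSub L s T :=
  ⟨[T], compFactors_simple hT, fun _ hM => ⟨t, ht, ⟨List.eq_of_mem_singleton hM ▸ e⟩⟩⟩

open Classical in
theorem eq_mult_of_additive (r : A → Cardinal.{w}) (hzero : ∀ Z : A, IsZero Z → r Z = 0)
    (hadd : ∀ {Y Z T : A} (i : Y ⟶ Z) (p : Z ⟶ T) (w : i ≫ p = 0),
      (ShortComplex.mk i p w).ShortExact → InSub L s Y → InSub L s Z → InSub L s T →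
        r Z = r Y + r T)
    (hsimple : ∀ T : A, Simple T → r T = if Nonempty (T ≅ L s) then 1 else 0)
    {X : A} {l : List A} (h : CompFactors X l)
    (hl : ∀ M ∈ l, ∃ t : S, t ≤ s ∧ Nonempty (M ≅ L t)) :
    r X = mult (L s) l := by
  induction h with
  | nil hX => simp [hzero _ hX, mult]
  | @cons X Y T l hT i p w hse hY ih =>
    have hlY := fun M hM => hl M (List.mem_cons_of_mem T hM)
    obtain ⟨t, ht, ⟨e⟩⟩ := hl T List.mem_cons_self
    rw [hadd i p w hse ⟨l, hY, hlY⟩ ⟨T :: l, .cons hT i p w hse hY, hl⟩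
      (inSub_of_simple hT ht e), ih hlY, hsimple T hT]
    simp [mult, List.countP_cons]

namespace QHData

variable (d : QHData L) (s : S)

attribute [local instance] QHData.φ_epi QHData.ψ_mono

theorem φ_comp_ψ_ne_zero [Simple (L s)] : d.φ s ≫ d.ψ s ≠ 0 := fun h =>
  Simple.not_isZero (L s) (IsZero.of_mono_eq_zero _ (zero_of_epi_comp (d.φ s) h))

theorem exists_iso_of_epi [Simple (L s)] {T : A} [Simple T] (e : d.M s ⟶ T) [Epi e] :
    ∃ u : T ≅ L s, e ≫ u.hom = d.φ s := by
  have he : e ≠ 0 := fun h => Simple.not_isZero T (IsZero.of_epi_eq_zero e h)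
  have hker : kernel.ι e ≫ d.φ s = 0 := by
    by_contra hc
    have := d.φ_ess s _ (kernel.ι e) (epi_of_nonzero_to_simple hc)
    exact he (zero_of_epi_comp (kernel.ι e) (kernel.condition e))
  have hu : Abelian.epiDesc e (d.φ s) hker ≠ 0 := fun h => by
    have := Abelian.comp_epiDesc e (d.φ s) hker
    rw [h, comp_zero] at this
    exact Simple.not_isZero (L s) (IsZero.of_epi_eq_zero _ this.symm)
  have := isIso_of_hom_simple hu
  exact ⟨asIso (Abelian.epiDesc e (d.φ s) hker), Abelian.comp_epiDesc e (d.φ s) hker⟩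

theorem exists_iso_of_mono [Simple (L s)] {T : A} [Simple T] (n : T ⟶ d.N s) [Mono n] :
    ∃ v : L s ≅ T, v.hom ≫ n = d.ψ s := by
  have hn : n ≠ 0 := fun h => Simple.not_isZero T (IsZero.of_mono_eq_zero n h)
  have hcoker : d.ψ s ≫ cokernel.π n = 0 := by
    by_contra hc
    have := d.ψ_ess s _ (cokernel.π n) (mono_of_nonzero_from_simple hc)
    exact hn (zero_of_comp_mono (cokernel.π n) (cokernel.condition n))
  have hv : Abelian.monoLift n (d.ψ s) hcoker ≠ 0 := fun h => by
    have := Abelian.monoLift_comp n (d.ψ s) hcoker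
    rw [h, zero_comp] at this
    exact Simple.not_isZero (L s) (IsZero.of_mono_eq_zero _ this.symm)
  have := isIso_of_hom_simple hv
  exact ⟨asIso (Abelian.monoLift n (d.ψ s) hcoker), Abelian.monoLift_comp n (d.ψ s) hcoker⟩

variable {k : Type*} [Field k] [Linear k A]

open Classical in
theorem rank_hom_M_simple [Simple (L s)] (hL : ∀ f : L s ⟶ L s, ∃ c : k, f = c • 𝟙 (L s))
    (T : A) [Simple T] :
    Module.rank k (d.M s ⟶ T) = if Nonempty (T ≅ L s) then 1 else 0 := by
  rw [← rank_hom_simple_simple_of_end_src hL]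
  refine (LinearEquiv.ofBijective (Linear.leftComp k T (d.φ s)) ⟨?_, fun f => ?_⟩).rank_eq.symm
  · exact fun f g h => (cancel_epi (d.φ s)).mp h
  · by_cases hf : f = 0
    · exact ⟨0, by simp [hf]⟩
    · have := epi_of_nonzero_to_simple hf
      obtain ⟨u, hu⟩ := d.exists_iso_of_epi s f
      exact ⟨u.inv, by simp [← hu]⟩

open Classical in
theorem rank_hom_N_simple [Simple (L s)] (hL : ∀ f : L s ⟶ L s, ∃ c : k, f = c • 𝟙 (L s))
    (T : A) [Simple T] :
    Module.rank k (T ⟶ d.N s) = if Nonempty (T ≅ L s) then 1 else 0 := by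
  rw [← rank_hom_simple_simple_of_end_tgt hL]
  refine (LinearEquiv.ofBijective (Linear.rightComp k T (d.ψ s)) ⟨?_, fun f => ?_⟩).rank_eq.symm
  · exact fun f g h => (cancel_mono (d.ψ s)).mp h
  · by_cases hf : f = 0
    · exact ⟨0, by simp [hf]⟩
    · have := mono_of_nonzero_from_simple hf
      obtain ⟨v, hv⟩ := d.exists_iso_of_mono s f
      exact ⟨v.inv, by simp [← hv]⟩

theorem rank_hom_M_eq_add {Y Z T : A} (i : Y ⟶ Z) (p : Z ⟶ T) (w : i ≫ p = 0)
    (hse : (ShortComplex.mk i p w).ShortExact) (hZ : InSub L s Z) (hT : InSub L s T) :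
    Module.rank k (d.M s ⟶ Z) = Module.rank k (d.M s ⟶ Y) + Module.rank k (d.M s ⟶ T) := by
  have := hse.mono_f
  refine rank_eq_add_of_shortExact (α := Linear.rightComp k (d.M s) i)
    (β := Linear.rightComp k (d.M s) p) (fun f g h => (cancel_mono i).mp h)
    (fun f => d.M_proj s Z T hZ hT p hse.epi_g f) fun f => ⟨fun hf => ?_, ?_⟩
  · exact (hse.exact.lift' f hf).imp fun _ h => h
  · rintro ⟨f', rfl⟩
    simp [Linear.rightComp, w]

theorem rank_hom_N_eq_add {Y Z T : A} (i : Y ⟶ Z) (p : Z ⟶ T) (w : i ≫ p = 0)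
    (hse : (ShortComplex.mk i p w).ShortExact) (hY : InSub L s Y) (hZ : InSub L s Z) :
    Module.rank k (Z ⟶ d.N s) = Module.rank k (Y ⟶ d.N s) + Module.rank k (T ⟶ d.N s) := by
  have := hse.epi_g
  rw [add_comm]
  refine rank_eq_add_of_shortExact (α := Linear.leftComp k (d.N s) p)
    (β := Linear.leftComp k (d.N s) i) (fun f g h => (cancel_epi p).mp h)
    (fun f => d.N_inj s Y Z hY hZ i hse.mono_f f) fun f => ⟨fun hf => ?_, ?_⟩
  · exact (hse.exact.desc' f hf).imp fun _ h => h
  · rintro ⟨f', rfl⟩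
    simp [Linear.leftComp, reassoc_of% w]

theorem rank_hom_M_eq_mult [Simple (L s)] (hL : ∀ f : L s ⟶ L s, ∃ c : k, f = c • 𝟙 (L s))
    {X : A} {l : List A} (h : CompFactors X l)
    (hl : ∀ M ∈ l, ∃ t : S, t ≤ s ∧ Nonempty (M ≅ L t)) :
    Module.rank k (d.M s ⟶ X) = mult (L s) l :=
  eq_mult_of_additive (fun Z => Module.rank k (d.M s ⟶ Z))
    (fun Z hZ => have : Subsingleton (d.M s ⟶ Z) := ⟨hZ.eq_of_tgt⟩; rank_subsingleton' k _)
    (fun i p w hse _ hZ hT => d.rank_hom_M_eq_add s i p w hse hZ hT)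
    (fun T _ => d.rank_hom_M_simple s hL T) h hl

theorem rank_hom_N_eq_mult [Simple (L s)] (hL : ∀ f : L s ⟶ L s, ∃ c : k, f = c • 𝟙 (L s))
    {X : A} {l : List A} (h : CompFactors X l)
    (hl : ∀ M ∈ l, ∃ t : S, t ≤ s ∧ Nonempty (M ≅ L t)) :
    Module.rank k (X ⟶ d.N s) = mult (L s) l :=
  eq_mult_of_additive (fun Z => Module.rank k (Z ⟶ d.N s))
    (fun Z hZ => have : Subsingleton (Z ⟶ d.N s) := ⟨hZ.eq_of_src⟩; rank_subsingleton' k _)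
    (fun i p w hse hY hZ _ => d.rank_hom_N_eq_add s i p w hse hY hZ)
    (fun T _ => d.rank_hom_N_simple s hL T) h hl

theorem comp_separatingLeft [Simple (L s)] {X : A} (hX : InSub L s X) (f : d.M s ⟶ X)
    (hf : f ≠ 0) : ∃ g : X ⟶ d.N s, f ≫ g ≠ 0 := by
  have hI : InSub L s (image f) := hX.of_mono (image.ι f)
  have ⟨_, hlI, _⟩ := hI
  obtain ⟨T, _, q, _⟩ := hlI.exists_epi_simple (not_isZero_image hf)
  obtain ⟨u, hu⟩ := d.exists_iso_of_epi s (factorThruImage f ≫ q)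
  obtain ⟨g, hg⟩ := d.N_inj s _ X hI hX (image.ι f) inferInstance (q ≫ u.hom ≫ d.ψ s)
  refine ⟨g, ?_⟩
  calc f ≫ g = factorThruImage f ≫ image.ι f ≫ g := (image.fac_assoc f g).symm
    _ = d.φ s ≫ d.ψ s := by simp [hg, ← hu]
    _ ≠ 0 := d.φ_comp_ψ_ne_zero s

theorem comp_separatingRight [Simple (L s)] {X : A} (hX : InSub L s X) (g : X ⟶ d.N s)
    (hg : g ≠ 0) : ∃ f : d.M s ⟶ X, f ≫ g ≠ 0 := by
  have hI : InSub L s (image g) := (d.N_mem s).of_mono (image.ι g)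
  have ⟨_, hlI, _⟩ := hI
  obtain ⟨T, _, n, _⟩ := hlI.exists_mono_simple (not_isZero_image hg)
  obtain ⟨v, hv⟩ := d.exists_iso_of_mono s (n ≫ image.ι g)
  obtain ⟨f, hf⟩ := d.M_proj s X _ hX hI (factorThruImage g) inferInstance (d.φ s ≫ v.hom ≫ n)
  refine ⟨f, ?_⟩
  calc f ≫ g = (f ≫ factorThruImage g) ≫ image.ι g := by rw [Category.assoc, image.fac]
    _ = d.φ s ≫ v.hom ≫ n ≫ image.ι g := by simp [hf]
    _ = d.φ s ≫ d.ψ s := by rw [hv]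
    _ ≠ 0 := d.φ_comp_ψ_ne_zero s

end QHData

end StmtAux

theorem stmt7_general (k : Type*) [Field k] (A : Type u) [Category.{v} A] [Abelian A]
    [Linear k A]
    (hend : ∀ L : A, Simple L → ∀ f : L ⟶ L, ∃ c : k, f = c • 𝟙 L)
    {S : Type*} [LinearOrder S] (L : S → A)
    (hsimple : ∀ s : S, Simple (L s))
    (d : QHData L) (s : S) (X : A) (hX : InSub L s X) :
    Module.finrank k (d.M s ⟶ d.N s) = 1 ∧
    (∀ f : d.M s ⟶ X, f ≠ 0 → ∃ g : X ⟶ d.N s, f ≫ g ≠ 0) ∧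
    (∀ g : X ⟶ d.N s, g ≠ 0 → ∃ f : d.M s ⟶ X, f ≫ g ≠ 0) ∧
    Module.finrank k (d.M s ⟶ X) = Module.finrank k (X ⟶ d.N s) := by
  have := hsimple s
  have hL := hend (L s) (hsimple s)
  refine ⟨?_, d.comp_separatingLeft s hX, d.comp_separatingRight s hX, ?_⟩
  · obtain ⟨lN, hlN, hfacN⟩ := d.N_mem s
    apply Module.finrank_eq_of_rank_eq
    rw [d.rank_hom_M_eq_mult s hL hlN hfacN, d.N_mult s lN hlN, Nat.cast_one]
  · obtain ⟨l, hl, hfac⟩ := hX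
    rw [Module.finrank_eq_of_rank_eq (d.rank_hom_M_eq_mult s hL hl hfac),
      Module.finrank_eq_of_rank_eq (d.rank_hom_N_eq_mult s hL hl hfac)]

/-- For `X ∈ A_{⪯ s}`, the composition pairing
`Hom(M s, X) ⊗ Hom(X, N s) → Hom(M s, N s) ≅ k` is nondegenerate; in
particular `dim Hom(M s, X) = dim Hom(X, N s)`. -/
theorem stmt7 (k : Type*) [Field k] (A : Type u) [Category.{v} A] [Abelian A]
    [Linear k A]
    (hfl : ∀ X : A, ∃ l : List A, CompFactors X l)
    (hend : ∀ L : A, Simple L → ∀ f : L ⟶ L, ∃ c : k, f = c • 𝟙 L)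
    {S : Type*} [LinearOrder S] (L : S → A)
    (hsimple : ∀ s : S, Simple (L s))
    (hdist : ∀ s t : S, Nonempty (L s ≅ L t) → s = t)
    (d : QHData L) (s : S) (X : A) (hX : InSub L s X) :
    Module.finrank k (d.M s ⟶ d.N s) = 1 ∧
    (∀ f : d.M s ⟶ X, f ≠ 0 → ∃ g : X ⟶ d.N s, f ≫ g ≠ 0) ∧
    (∀ g : X ⟶ d.N s, g ≠ 0 → ∃ f : d.M s ⟶ X, f ≫ g ≠ 0) ∧
    Module.finrank k (d.M s ⟶ X) = Module.finrank k (X ⟶ d.N s) :=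
  stmt7_general k A hend L hsimple d s X hX
end
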